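/- arXiv:1804.02552 — 3 statements merged into one kernel-verified Lean document; each statement's English description precedes it below -/
import Mathlib

section
/- Let X be a topological space. If there exists a continuous linear surjection from C_p(X) onto ℝ^ℕ, then X is not pseudocompact. -/
/-! For the pointwise topology every sup-norm ball of `C_p(X)` is von Neumann bounded, so its image
under a continuous linear map to `ℝ^ℕ` is bounded, i.e. coordinatewise bounded. If `X` is
pseudocompact, `C_p(X)` is the union of countably many such balls, so a surjection would make `ℝ^ℕ`
a countable union of bounded sets, which a diagonal sequence rules out. -/

open Topology Filter

/-- The space `C_p(X)` of continuous real functions with the topology of pointwise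
convergence, realized as a submodule of `X → ℝ` (with the subspace topology
inherited from the product topology). -/
def Cp (X : Type*) [TopologicalSpace X] : Submodule ℝ (X → ℝ) where
  carrier := {f | Continuous f}
  add_mem' hf hg := hf.add hg
  zero_mem' := continuous_const
  smul_mem' _c _f hf := continuous_const.mul hf

/-- A topological space is pseudocompact if every continuous real-valued function
on it is bounded. -/
def Pseudocompact (X : Type*) [TopologicalSpace X] : Prop :=
  ∀ f : X → ℝ, Continuous f → ∃ C, ∀ x, |f x| ≤ C

open Bornology Set

theorem Bornology.IsVonNBounded.of_image_of_isInducing {𝕜 E F : Type*} [NormedDivisionRing 𝕜]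
    [AddCommGroup E] [Module 𝕜 E] [TopologicalSpace E]
    [AddCommGroup F] [Module 𝕜 F] [TopologicalSpace F]
    {f : E →ₗ[𝕜] F} (hf : IsInducing f) {S : Set E} (hS : IsVonNBounded 𝕜 (f '' S)) :
    IsVonNBounded 𝕜 S := by
  rw [isVonNBounded_iff_tendsto_smallSets_nhds] at hS ⊢
  rw [hf.nhds_eq_comap, map_zero, smallSets_comap_eq_comap_image, tendsto_comap_iff]
  simpa only [Function.comp_def, image_smul_set] using hS

theorem isVonNBounded_setOf_forall_abs_le (ι : Type*) (r : ℝ) :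
    IsVonNBounded ℝ {f : ι → ℝ | ∀ i, |f i| ≤ r} := by
  rw [isVonNBounded_pi_iff]
  intro i
  rw [NormedSpace.isVonNBounded_iff, isBounded_iff_forall_norm_le]
  exact ⟨r, forall_mem_image.2 fun f hf => hf i⟩

theorem Cp.isVonNBounded_setOf_forall_abs_le (X : Type*) [TopologicalSpace X] (r : ℝ) :
    IsVonNBounded ℝ {f : Cp X | ∀ x, |(f : X → ℝ) x| ≤ r} :=
  IsVonNBounded.of_image_of_isInducing (f := (Cp X).subtype) IsInducing.subtypeVal <|
    (_root_.isVonNBounded_setOf_forall_abs_le X r).subset <| by rintro _ ⟨f, hf, rfl⟩; exact hf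

theorem exists_forall_notMem_of_isVonNBounded {S : ℕ → Set (ℕ → ℝ)}
    (hS : ∀ n, IsVonNBounded ℝ (S n)) : ∃ g : ℕ → ℝ, ∀ n, g ∉ S n := by
  have hbdd : ∀ n, ∃ c, ∀ g ∈ S n, |g n| ≤ c := fun n => by
    have := isVonNBounded_pi_iff.1 (hS n) n
    rw [NormedSpace.isVonNBounded_iff, isBounded_iff_forall_norm_le] at this
    simpa using this
  choose c hc using hbdd
  refine ⟨fun n => c n + 1, fun n hn => ?_⟩
  have := (le_abs_self _).trans (hc n _ hn)
  linarith

theorem Pseudocompact.iUnion_setOf_forall_abs_le_eq_univ {X : Type*} [TopologicalSpace X]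
    (hX : Pseudocompact X) : ⋃ n : ℕ, {f : Cp X | ∀ x, |(f : X → ℝ) x| ≤ n} = univ := by
  refine eq_univ_of_forall fun f => ?_
  obtain ⟨C, hC⟩ := hX f f.2
  exact mem_iUnion.2 ⟨⌈C⌉₊, fun x => (hC x).trans (Nat.le_ceil C)⟩

/-- If there is a continuous linear surjection from `C_p(X)` onto `ℝ^ℕ`,
then `X` is not pseudocompact. -/
theorem not_pseudocompact_of_surj_onto_pi (X : Type*) [TopologicalSpace X]
    (h : ∃ T : Cp X →L[ℝ] (ℕ → ℝ), Function.Surjective T) :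
    ¬ Pseudocompact X := by
  intro hX
  obtain ⟨T, hT⟩ := h
  obtain ⟨g, hg⟩ := exists_forall_notMem_of_isVonNBounded fun n =>
    (Cp.isVonNBounded_setOf_forall_abs_le X n).image T
  obtain ⟨f, rfl⟩ := hT g
  obtain ⟨n, hn⟩ := mem_iUnion.1 (hX.iUnion_setOf_forall_abs_le_eq_univ.symm ▸ mem_univ f)
  exact hg n (mem_image_of_mem T hn)
end

section
/- Let X be a pseudocompact Tychonoff space containing an infinite discrete C*-embedded subspace D, and let (F_n)_{n=1}^∞ be a sequence of non-empty, finite, pairwise disjoint subsets of D with lim_{n→∞} |F_n| = ∞. Then the linear map T : C_p(X) → ℝ^ℕ defined by T(f) = ( |F_n|^{-1} · Σ_{x∈F_n} f(x) )_{n=1}^∞ has image exactly equal to ℓ∞ = {x ∈ ℝ^ℕ : sup_n |x_n| < ∞}, and T is continuous and open as a map from C_p(X) onto ℓ∞ (with the subspace topology of ℝ^ℕ). -/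
open Topology Filter

/-- `ℓ∞`, the linear subspace of bounded sequences of `ℝ^ℕ`
(with the subspace topology inherited from the product topology). -/
def ellInfty : Submodule ℝ (ℕ → ℝ) where
  carrier := {x | ∃ C, ∀ n, |x n| ≤ C}
  add_mem' := by
    rintro x y ⟨C, hC⟩ ⟨D, hD⟩
    exact ⟨C + D, fun n => (abs_add_le _ _).trans (add_le_add (hC n) (hD n))⟩
  zero_mem' := ⟨0, fun n => by simp⟩
  smul_mem' := by
    rintro c x ⟨C, hC⟩
    refine ⟨|c| * C, fun n => ?_⟩
    rw [Pi.smul_apply, smul_eq_mul, abs_mul]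
    exact mul_le_mul_of_nonneg_left (hC n) (abs_nonneg c)

/-- A subset `D` of a topological space `X` is `C*`-embedded if every bounded
continuous real-valued function on `D` (with the subspace topology) extends
continuously to `X`. -/
def CStarEmbedded {X : Type*} [TopologicalSpace X] (D : Set X) : Prop :=
  ∀ f : D → ℝ, Continuous f → (∃ C, ∀ x, |f x| ≤ C) →
    ∃ g : X → ℝ, Continuous g ∧ ∀ x : D, g x = f x

/-- The averaging map `T : C_p(X) → ℝ^ℕ`, `T(f)ₙ = |Fₙ|⁻¹ · Σ_{x ∈ Fₙ} f(x)`. -/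
noncomputable def avgMap {X : Type*} [TopologicalSpace X] (F : ℕ → Finset X)
    (f : Cp X) : ℕ → ℝ :=
  fun n => ((F n).card : ℝ)⁻¹ * ∑ x ∈ F n, (f : X → ℝ) x

/-!
The image lies in `ℓ∞` by pseudocompactness. For the converse and for openness, fix a finite
`K ⊆ X`. Colour every block `Fₙ` equitably with `|K| + 1` colours and extend the colouring to a
continuous `φ : X → ℝ`, which is possible since `D` is discrete and `C*`-embedded. Some colour `i`
is not the nearest integer to any `φ z`, `z ∈ K`, so `w = ∏_{z ∈ K} min 1 (2 |φ - φ z|)` vanishes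
on `K` but equals `1` on the colour class `i`, a fixed fraction of every large block. Prescribed
bounded averages are then realised by `G * w + g`, where `G` and `g` are continuous extensions of
blockwise constant functions: `g` handles the finitely many small blocks and is small on `K`,
while `G * w` handles the remaining blocks and vanishes on `K`.
-/

open Finset Function

lemma Finset.exists_fin_coloring_div_le_card_fiber {α : Type*} (s : Finset α) (r : ℕ) [NeZero r] :
    ∃ c : α → Fin r, ∀ i, #s / r ≤ #{x ∈ s | c x = i} := by
  classical
  let idx : α → ℕ := fun x => if hx : x ∈ s then s.equivFin ⟨x, hx⟩ else 0
  have idx_of_mem {x} (hx : x ∈ s) : idx x = s.equivFin ⟨x, hx⟩ := dif_pos hx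
  refine ⟨fun x => ⟨idx x % r, Nat.mod_lt _ (NeZero.pos r)⟩, fun i => ?_⟩
  have hcount : #{x ∈ s | idx x % r = i} = (#s).count (· ≡ i [MOD r]) := by
    rw [Nat.count_eq_card_filter_range]
    refine card_nbij idx (fun x hx => ?_) (fun x hx y hy hxy => ?_) (fun j hj => ?_)
    · simp only [coe_filter, Set.mem_ofPred_eq] at hx
      simp only [coe_filter, mem_range, Set.mem_ofPred_eq, Nat.ModEq, hx.2, Nat.mod_eq_of_lt i.2,
        and_true]
      exact idx_of_mem hx.1 ▸ Fin.is_lt _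
    · simp only [coe_filter, Set.mem_ofPred_eq] at hx hy
      rw [idx_of_mem hx.1, idx_of_mem hy.1] at hxy
      simpa using s.equivFin.injective (Fin.ext hxy)
    · simp only [coe_filter, mem_range, Set.mem_ofPred_eq, Nat.ModEq, Nat.mod_eq_of_lt i.2] at hj
      exact ⟨s.equivFin.symm ⟨j, hj.1⟩, by simp [idx_of_mem, hj.2], by simp [idx_of_mem]⟩
  simp only [Fin.ext_iff]
  rw [hcount, Nat.count_modEq_card _ (NeZero.pos r)]
  exact Nat.le_add_right _ _

lemma exists_eqOn_of_pairwise_disjoint {ι α β : Type*} {s : ι → Set α}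
    (hs : Pairwise (Disjoint on s)) (g : ι → α → β) (b : β) :
    ∃ G : α → β, (∀ i, Set.EqOn G (g i) (s i)) ∧ ∀ x, G x = b ∨ ∃ i, G x = g i x := by
  classical
  refine ⟨fun x => if h : ∃ i, x ∈ s i then g h.choose x else b, fun i x hx => ?_, fun x => ?_⟩
  · have h : ∃ i, x ∈ s i := ⟨i, hx⟩
    simp only [dif_pos h]
    rw [hs.eq (Set.not_disjoint_iff.2 ⟨x, h.choose_spec, hx⟩)]
  · by_cases h : ∃ i, x ∈ s i
    · exact .inr ⟨h.choose, dif_pos h⟩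
    · exact .inl (dif_neg h)

lemma exists_fin_coloring_div_le_card_fiber_of_pairwise_disjoint {ι α : Type*}
    {F : ι → Finset α} (hF : Pairwise (Disjoint on F)) (r : ℕ) [NeZero r] :
    ∃ κ : α → Fin r, ∀ n i, #(F n) / r ≤ #{x ∈ F n | κ x = i} := by
  choose c hc using fun n => (F n).exists_fin_coloring_div_le_card_fiber r
  obtain ⟨κ, hκ, -⟩ := exists_eqOn_of_pairwise_disjoint
    (fun m n hmn => Finset.disjoint_coe.2 (hF hmn)) c 0
  refine ⟨κ, fun n i => (hc n i).trans_eq ?_⟩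
  congr 1
  exact filter_congr fun x hx => by rw [hκ n hx]

lemma Finset.exists_fin_forall_intCast_ne {α : Type*} (s : Finset α) (f : α → ℤ) :
    ∃ i : Fin (#s + 1), ∀ z ∈ s, ((i : ℕ) : ℤ) ≠ f z := by
  have hcard : #(s.image f) < #(univ.image fun i : Fin (#s + 1) => ((i : ℕ) : ℤ)) := by
    rw [card_image_of_injective _ fun a b h => Fin.ext (by exact_mod_cast h), card_univ,
      Fintype.card_fin]
    exact card_image_le.trans_lt (Nat.lt_succ_self _)
  obtain ⟨_, hmem, hnot⟩ := exists_mem_notMem_of_card_lt_card hcard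
  obtain ⟨i, -, rfl⟩ := mem_image.1 hmem
  exact ⟨i, fun z hz h => hnot (mem_image.2 ⟨z, hz, h.symm⟩)⟩

lemma Nat.le_two_mul_mul_div_of_le {n r : ℕ} (hr : 0 < r) (h : r ≤ n) : n ≤ 2 * r * (n / r) := by
  have := Nat.div_add_mod n r
  have := Nat.mod_lt n hr
  have : r ≤ r * (n / r) := Nat.le_mul_of_pos_right _ (Nat.div_pos h hr)
  nlinarith

lemma half_le_abs_intCast_sub_of_ne_round {α : Type*} [Field α] [LinearOrder α]
    [IsStrictOrderedRing α] [FloorRing α] {m : ℤ} {t : α} (h : m ≠ round t) :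
    1 / 2 ≤ |(m : α) - t| := by
  have h1 : (1 : α) ≤ |(m : α) - round t| := by
    exact_mod_cast Int.one_le_abs (sub_ne_zero.2 h)
  have h2 := abs_sub_round t
  have h3 := abs_sub_le (m : α) t (round t)
  linarith

lemma isOpenMap_rangeFactorization_of_forall_mem_nhds {α β : Type*} [TopologicalSpace α]
    [TopologicalSpace β] {f : α → β}
    (h : ∀ a, ∀ U ∈ 𝓝 a, ∃ V ∈ 𝓝 (f a), V ∩ Set.range f ⊆ f '' U) :
    IsOpenMap (Set.rangeFactorization f) := by
  intro U hU
  rw [isOpen_iff_mem_nhds]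
  rintro _ ⟨a, ha, rfl⟩
  obtain ⟨V, hV, hVU⟩ := h a U (hU.mem_nhds ha)
  refine (mem_nhds_subtype _ _ _).2 ⟨V, hV, fun y hyV => ?_⟩
  obtain ⟨a', ha', hy⟩ := hVU ⟨hyV, y.2⟩
  exact ⟨a', ha', Subtype.ext hy⟩

lemma exists_finset_forall_dist_lt_of_mem_nhds {ι : Type*} {π : ι → Type*}
    [∀ i, PseudoMetricSpace (π i)] {x : ∀ i, π i} {U : Set (∀ i, π i)} (hU : U ∈ 𝓝 x) :
    ∃ K : Finset ι, ∃ ε > 0, ∀ y, (∀ i ∈ K, dist (y i) (x i) < ε) → y ∈ U := by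
  rw [nhds_pi, Filter.mem_pi'] at hU
  obtain ⟨K, t, ht, hKt⟩ := hU
  have hball : ∀ᶠ ε in 𝓝[>] (0 : ℝ), ∀ i ∈ K, Metric.ball (x i) ε ⊆ t i :=
    (eventually_all_finset K).2 fun i _ => by
      obtain ⟨ε, hε, hεt⟩ := Metric.mem_nhds_iff.1 (ht i)
      filter_upwards [Ioo_mem_nhdsGT hε] with ε' hε'
      exact (Metric.ball_subset_ball hε'.2.le).trans hεt
  obtain ⟨ε, hεt, hε⟩ := (hball.and self_mem_nhdsWithin).exists
  exact ⟨K, ε, hε, fun y hy => hKt fun i hi => hεt i hi (hy i hi)⟩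

section Blocks

variable {X : Type*} [TopologicalSpace X] {D : Set X}

lemma CStarEmbedded.exists_continuous_eqOn_abs_le [DiscreteTopology D] (hD : CStarEmbedded D)
    {h : X → ℝ} {M : ℝ} (hM : 0 ≤ M) (hh : ∀ x ∈ D, |h x| ≤ M) :
    ∃ g : X → ℝ, Continuous g ∧ Set.EqOn g h D ∧ ∀ x, |g x| ≤ M := by
  obtain ⟨g, hg, hgh⟩ := hD (fun x => h x) continuous_of_discreteTopology
    ⟨M, fun x => hh x x.2⟩
  have hclamp : -M ≤ M := by linarith
  refine ⟨fun x => Set.projIcc (-M) M hclamp (g x),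
    continuous_subtype_val.comp (continuous_projIcc.comp hg), fun x hx => ?_,
    fun x => abs_le.2 (Set.projIcc (-M) M hclamp (g x)).2⟩
  simp only [hgh ⟨x, hx⟩, Set.projIcc_of_mem hclamp (abs_le.1 (hh x hx))]

lemma CStarEmbedded.exists_continuous_eq_on_blocks [DiscreteTopology D] (hD : CStarEmbedded D)
    {F : ℕ → Finset X} (hFD : ∀ n, ↑(F n) ⊆ D) (hF : Pairwise (Disjoint on F))
    {v : ℕ → ℝ} {M : ℝ} (hv : ∀ n, |v n| ≤ M) :
    ∃ g : X → ℝ, Continuous g ∧ (∀ x, |g x| ≤ M) ∧ ∀ n, ∀ x ∈ F n, g x = v n := by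
  have hM : 0 ≤ M := (abs_nonneg _).trans (hv 0)
  obtain ⟨h, hhF, hh⟩ := exists_eqOn_of_pairwise_disjoint
    (fun m n hmn => Finset.disjoint_coe.2 (hF hmn)) (fun n _ => v n) 0
  obtain ⟨g, hg, hgh, hgM⟩ := hD.exists_continuous_eqOn_abs_le (h := h) hM fun x _ => by
    rcases hh x with hx | ⟨n, hx⟩ <;> rw [hx]
    exacts [abs_zero.trans_le hM, hv n]
  exact ⟨g, hg, hgM, fun n x hx => (hgh (hFD n hx)).trans (hhF n hx)⟩

lemma CStarEmbedded.exists_vanishing_weight [DiscreteTopology D] (hD : CStarEmbedded D)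
    {F : ℕ → Finset X} (hFD : ∀ n, ↑(F n) ⊆ D) (hF : Pairwise (Disjoint on F))
    (hFcard : Tendsto (fun n => #(F n)) atTop atTop) (K : Finset X) :
    ∃ w : X → ℝ, Continuous w ∧ (∀ x ∈ K, w x = 0) ∧ (∀ x, 0 ≤ w x) ∧
      ∃ c > 0, ∀ᶠ n in atTop, (#(F n) : ℝ) ≤ c * ∑ x ∈ F n, w x := by
  set r := #K + 1
  have hr : 0 < r := Nat.succ_pos _
  obtain ⟨κ, hκ⟩ := exists_fin_coloring_div_le_card_fiber_of_pairwise_disjoint hF r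
  obtain ⟨φ, hφ, hφκ, -⟩ := hD.exists_continuous_eqOn_abs_le (h := fun x => ((κ x : ℕ) : ℝ))
    (M := r) (by positivity) fun x _ => by
      rw [abs_of_nonneg (by positivity)]
      exact_mod_cast (κ x).2.le
  obtain ⟨i, hi⟩ := K.exists_fin_forall_intCast_ne fun z => round (φ z)
  let w : X → ℝ := fun x => ∏ z ∈ K, min 1 (2 * |φ x - φ z|)
  have hw_nonneg (x : X) : 0 ≤ w x := prod_nonneg fun _ _ => by positivity
  have hw_one : ∀ n, ∀ x ∈ F n, κ x = i → w x = 1 := fun n x hx hκx =>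
    prod_eq_one fun z hz => min_eq_left <| by
      have hφx : φ x = (i : ℕ) := by simp [hφκ (hFD n hx), hκx]
      have := half_le_abs_intCast_sub_of_ne_round (hi z hz)
      rw [hφx]
      push_cast at this
      linarith
  refine ⟨w, by fun_prop, fun x hx => prod_eq_zero hx (by simp), hw_nonneg, 2 * r, by positivity,
    ?_⟩
  filter_upwards [hFcard.eventually_ge_atTop r] with n hn
  calc (#(F n) : ℝ) ≤ 2 * r * (#(F n) / r : ℕ) := by
        exact_mod_cast Nat.le_two_mul_mul_div_of_le hr hn
    _ ≤ 2 * r * #{x ∈ F n | κ x = i} := by gcongr; exact hκ n i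
    _ = 2 * r * ∑ x ∈ F n with κ x = i, w x := by
      rw [sum_congr rfl fun x hx => hw_one n x (mem_filter.1 hx).1 (mem_filter.1 hx).2,
        sum_const, nsmul_one]
    _ ≤ 2 * r * ∑ x ∈ F n, w x := by
      gcongr 2 * r * ?_
      exact sum_le_sum_of_subset_of_nonneg (filter_subset _ _) fun x _ _ => hw_nonneg x

end Blocks

section AvgMap

variable {X : Type*} [TopologicalSpace X]

lemma isLinearMap_avgMap (F : ℕ → Finset X) : IsLinearMap ℝ (avgMap F) where
  map_add f g := funext fun n => by
    simp only [avgMap, Submodule.coe_add, Pi.add_apply, sum_add_distrib, mul_add]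
  map_smul c f := funext fun n => by
    simp only [avgMap, Submodule.coe_smul, Pi.smul_apply, smul_eq_mul, ← mul_sum]
    ring

lemma continuous_avgMap (F : ℕ → Finset X) : Continuous (avgMap F) :=
  continuous_pi fun _ => continuous_const.mul <|
    continuous_finsetSum _ fun x _ => (continuous_apply x).comp continuous_subtype_val

lemma abs_avgMap_le (F : ℕ → Finset X) {f : Cp X} {C : ℝ} (hC₀ : 0 ≤ C)
    (hC : ∀ x, |(f : X → ℝ) x| ≤ C) (n : ℕ) : |avgMap F f n| ≤ C := by
  rw [avgMap, inv_mul_eq_div, ← expect_eq_sum_div_card]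
  rcases (F n).eq_empty_or_nonempty with hF | hF
  · simpa [hF] using hC₀
  · exact (abs_expect_le _ _).trans (expect_le hF fun x _ => hC x)

lemma avgMap_mem_ellInfty (hX : Pseudocompact X) (F : ℕ → Finset X) (f : Cp X) :
    avgMap F f ∈ ellInfty := by
  obtain ⟨C, hC⟩ := hX f f.2
  exact ⟨max C 0, abs_avgMap_le F (le_max_right _ _) fun x => (hC x).trans (le_max_left _ _)⟩

variable {D : Set X} [DiscreteTopology D] {F : ℕ → Finset X}

lemma avgMap_mul_add_apply {G w g : X → ℝ} (hc : Continuous (G * w + g)) {n : ℕ} {a b : ℝ}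
    (hG : ∀ x ∈ F n, G x = a) (hg : ∀ x ∈ F n, g x = b) :
    avgMap F ⟨G * w + g, hc⟩ n = (#(F n) : ℝ)⁻¹ * (a * ∑ x ∈ F n, w x + #(F n) * b) := by
  simp only [avgMap, Pi.add_apply, Pi.mul_apply, sum_add_distrib]
  rw [sum_congr rfl fun x hx => by rw [hG x hx], sum_congr rfl hg, ← mul_sum, sum_const,
    nsmul_eq_mul]

theorem CStarEmbedded.exists_avgMap_eq (hD : CStarEmbedded D) (hFne : ∀ n, (F n).Nonempty)
    (hFD : ∀ n, ↑(F n) ⊆ D) (hF : Pairwise (Disjoint on F))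
    (hFcard : Tendsto (fun n => #(F n)) atTop atTop) (K : Finset X) :
    ∃ N, ∀ y ∈ ellInfty, ∀ δ, 0 ≤ δ → (∀ n < N, |y n| ≤ δ) →
      ∃ f : Cp X, (∀ x ∈ K, |(f : X → ℝ) x| ≤ δ) ∧ avgMap F f = y := by
  obtain ⟨w, hw, hwK, hw_nonneg, c, hc, hwF⟩ :=
    hD.exists_vanishing_weight hFD hF hFcard K
  obtain ⟨N, hN⟩ := eventually_atTop.1 hwF
  refine ⟨N, fun y ⟨C, hC⟩ δ hδ hyδ => ?_⟩
  have hC₀ : 0 ≤ C := (abs_nonneg _).trans (hC 0)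
  let S : ℕ → ℝ := fun n => ∑ x ∈ F n, w x
  have hcard_pos (n : ℕ) : (0 : ℝ) < #(F n) := by exact_mod_cast (hFne n).card_pos
  have hS_pos (n : ℕ) (hn : N ≤ n) : 0 < S n :=
    pos_of_mul_pos_right ((hcard_pos n).trans_le (hN n hn)) hc.le
  let v₁ : ℕ → ℝ := fun n => if n < N then 0 else y n * #(F n) / S n
  let v₂ : ℕ → ℝ := fun n => if n < N then y n else 0
  obtain ⟨G, hG, -, hGF⟩ := hD.exists_continuous_eq_on_blocks hFD hF (v := v₁) (M := C * c)
    fun n => by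
      dsimp only [v₁]
      split_ifs with hn
      · simpa using mul_nonneg hC₀ hc.le
      · have hSn := hS_pos n (not_lt.1 hn)
        rw [abs_div, abs_mul, abs_of_pos hSn, Nat.abs_cast, div_le_iff₀ hSn, mul_assoc]
        exact mul_le_mul (hC n) (hN n (not_lt.1 hn)) (hcard_pos n).le hC₀
  obtain ⟨g, hg, hgδ, hgF⟩ := hD.exists_continuous_eq_on_blocks hFD hF (v := v₂) (M := δ)
    fun n => by
      dsimp only [v₂]
      split_ifs with hn
      exacts [hyδ n hn, by simpa using hδ]
  refine ⟨⟨G * w + g, (hG.mul hw).add hg⟩, fun x hx => by simpa [hwK x hx] using hgδ x,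
    funext fun n => ?_⟩
  rw [avgMap_mul_add_apply _ (hGF n) (hgF n)]
  have := (hcard_pos n).ne'
  dsimp only [v₁, v₂]
  split_ifs with hn
  · field_simp
    ring
  · have := (hS_pos n (not_lt.1 hn)).ne'
    field_simp
    ring

theorem CStarEmbedded.range_avgMap (hX : Pseudocompact X) (hD : CStarEmbedded D)
    (hFne : ∀ n, (F n).Nonempty) (hFD : ∀ n, ↑(F n) ⊆ D) (hF : Pairwise (Disjoint on F))
    (hFcard : Tendsto (fun n => #(F n)) atTop atTop) :
    Set.range (avgMap F) = ellInfty := by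
  refine subset_antisymm (Set.range_subset_iff.2 (avgMap_mem_ellInfty hX F)) fun y hy => ?_
  obtain ⟨C, hC⟩ := hy
  obtain ⟨N, hN⟩ := hD.exists_avgMap_eq hFne hFD hF hFcard ∅
  obtain ⟨f, -, hf⟩ := hN y ⟨C, hC⟩ C ((abs_nonneg _).trans (hC 0)) fun n _ => hC n
  exact ⟨f, hf⟩

theorem CStarEmbedded.isOpenMap_rangeFactorization_avgMap (hX : Pseudocompact X)
    (hD : CStarEmbedded D) (hFne : ∀ n, (F n).Nonempty) (hFD : ∀ n, ↑(F n) ⊆ D)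
    (hF : Pairwise (Disjoint on F)) (hFcard : Tendsto (fun n => #(F n)) atTop atTop) :
    IsOpenMap (Set.rangeFactorization (avgMap F)) := by
  refine isOpenMap_rangeFactorization_of_forall_mem_nhds fun f₀ U hU => ?_
  obtain ⟨u, hu, huU⟩ := (mem_nhds_subtype _ _ _).1 hU
  obtain ⟨K, ε, hε, hKu⟩ := exists_finset_forall_dist_lt_of_mem_nhds hu
  obtain ⟨N, hN⟩ := hD.exists_avgMap_eq hFne hFD hF hFcard K
  refine ⟨{y | ∀ n ∈ Finset.range N, dist (y n) (avgMap F f₀ n) < ε / 2}, ?_, ?_⟩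
  · exact (eventually_all_finset _).2 fun n _ =>
      ((continuous_apply n).tendsto (avgMap F f₀)).eventually_mem
        (Metric.ball_mem_nhds _ (half_pos hε))
  rintro _ ⟨hy, g, rfl⟩
  obtain ⟨f, hfK, hf⟩ := hN (avgMap F g - avgMap F f₀)
    (ellInfty.sub_mem (avgMap_mem_ellInfty hX F g) (avgMap_mem_ellInfty hX F f₀)) (ε / 2)
    (half_pos hε).le fun n hn => (Real.dist_eq _ _ ▸ hy n (mem_range.2 hn)).le
  refine ⟨f₀ + f, huU (hKu _ fun x hx => ?_), ?_⟩
  · simpa [Real.dist_eq] using (hfK x hx).trans_lt (half_lt_self hε)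
  · rw [(isLinearMap_avgMap F).map_add, hf, add_sub_cancel]

end AvgMap

theorem avgMap_linear_continuous_open_onto_ellInfty_general
    (X : Type*) [TopologicalSpace X]
    (hX : Pseudocompact X)
    (D : Set X) [DiscreteTopology D] (hD : CStarEmbedded D)
    (F : ℕ → Finset X)
    (hFne : ∀ n, (F n).Nonempty)
    (hFD : ∀ n, ↑(F n) ⊆ D)
    (hFdisj : ∀ m n, m ≠ n → Disjoint (F m) (F n))
    (hFcard : Filter.Tendsto (fun n => (F n).card) Filter.atTop Filter.atTop) :
    IsLinearMap ℝ (avgMap F) ∧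
    Continuous (avgMap F) ∧
    Set.range (avgMap F) = (ellInfty : Set (ℕ → ℝ)) ∧
    IsOpenMap (Set.rangeFactorization (avgMap F)) :=
  ⟨isLinearMap_avgMap F, continuous_avgMap F, hD.range_avgMap hX hFne hFD hFdisj hFcard,
    hD.isOpenMap_rangeFactorization_avgMap hX hFne hFD hFdisj hFcard⟩

/-- If a pseudocompact Tychonoff space `X` contains an infinite, discrete,
`C*`-embedded subspace `D`, and `(Fₙ)` is a sequence of nonempty, finite, pairwise
disjoint subsets of `D` with `|Fₙ| → ∞`, then the linear map
`T : C_p(X) → ℝ^ℕ`, `T(f) = (|Fₙ|⁻¹ Σ_{x ∈ Fₙ} f(x))ₙ`, is linear and continuous, its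
range is exactly `ℓ∞`, and `T` is open as a map onto its range `ℓ∞ ⊆ ℝ^ℕ` (with the
subspace topology). -/
theorem avgMap_linear_continuous_open_onto_ellInfty
    (X : Type*) [TopologicalSpace X] [T2Space X] [CompletelyRegularSpace X]
    (hX : Pseudocompact X)
    (D : Set X) (hDinf : D.Infinite) [DiscreteTopology D] (hD : CStarEmbedded D)
    (F : ℕ → Finset X)
    (hFne : ∀ n, (F n).Nonempty)
    (hFD : ∀ n, ↑(F n) ⊆ D)
    (hFdisj : ∀ m n, m ≠ n → Disjoint (F m) (F n))
    (hFcard : Filter.Tendsto (fun n => (F n).card) Filter.atTop Filter.atTop) :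
    IsLinearMap ℝ (avgMap F) ∧
    Continuous (avgMap F) ∧
    Set.range (avgMap F) = (ellInfty : Set (ℕ → ℝ)) ∧
    IsOpenMap (Set.rangeFactorization (avgMap F)) :=
  avgMap_linear_continuous_open_onto_ellInfty_general X hX D hD F hFne hFD hFdisj hFcard
end

section
/- Let X be a Tychonoff space containing an infinite discrete C*-embedded subspace. Then there exists a linear subspace Z of C_p(X) such that the quotient space C_p(X)/Z is linearly homeomorphic either to ℝ^ℕ or to the subspace ℓ∞ = {x ∈ ℝ^ℕ : sup_n |x_n| < ∞} of ℝ^ℕ; in particular C_p(X) has an infinite-dimensional metrizable quotient. -/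
open Topology Filter

/-!
If some continuous `f₀` is unbounded on `D`, pick `yₙ ∈ D` with `|f₀ yₙ|` increasing in steps of
at least `1`. Evaluation at the `yₙ` is then an open surjection `C_p(X) → ℝ^ℕ`: finitely many
prescribed values are realised by a small bounded extension from `D`, all the others by a function
of `|f₀|` that vanishes where `|f₀|` is small.

Otherwise every continuous function is bounded on `D`, and for an injective `p : ℕ × ℕ → D` the
weighted sums `∑_{k ≤ n} 2^{-k} f (p (n, k))` define an open surjection onto `ℓ∞`. Given a finite
`F ⊆ X`, extend the colouring `p (n, k) ↦ min k r` with `r > |F|` continuously to `w`; some colour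
`γ < r` stays at distance `≥ 1/2` from `w(F)`. The tail coordinates are realised on the points
`p (n, γ)` alone, by a bounded extension multiplied by a tent around `γ` composed with `w`, which
vanishes on `F`.

In both cases the quotient of `C_p(X)` by the kernel is the required one.
-/

theorem LinearMap.nonempty_quotKer_equiv_of_isOpenMap {M N : Type*} [AddCommGroup M] [Module ℝ M]
    [TopologicalSpace M] [AddCommGroup N] [Module ℝ N] [TopologicalSpace N]
    [IsTopologicalAddGroup N] [ContinuousSMul ℝ N]
    (T : M →ₗ[ℝ] N) (hc : Continuous T) (ho : IsOpenMap T) :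
    Nonempty ((M ⧸ LinearMap.ker T) ≃L[ℝ] N) := by
  have hrange : LinearMap.range T = ⊤ :=
    (LinearMap.range T).eq_top_of_nonempty_interior'
      ⟨T 0, interior_maximal (by rintro _ ⟨x, -, rfl⟩; exact ⟨x, rfl⟩)
        (ho _ isOpen_univ) ⟨0, trivial, rfl⟩⟩
  exact ⟨(ContinuousLinearEquiv.quotKerEquivRange (ho.isStrictMap hc)).trans
    ((ContinuousLinearEquiv.ofEq _ _ hrange).trans Submodule.topContEquiv)⟩

theorem hasBasis_nhds_zero_pi (ι : Type*) :
    (𝓝 (0 : ι → ℝ)).HasBasis (fun p : Set ι × ℝ => p.1.Finite ∧ 0 < p.2)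
      fun p => {a | ∀ i ∈ p.1, |a i| < p.2} := by
  rw [show 𝓝 (0 : ι → ℝ) = Filter.pi fun _ => 𝓝 0 from nhds_pi]
  refine ((Metric.nhds_basis_ball (x := (0 : ℝ))).pi_self).to_hasBasis ?_ ?_ <;>
  · rintro ⟨I, ε⟩ ⟨hI, hε⟩
    refine ⟨(I, ε), ⟨hI, hε⟩, fun a ha i hi => ?_⟩
    simpa [Real.dist_eq] using ha i hi

theorem Submodule.hasBasis_nhds_zero_pi {ι : Type*} (E : Submodule ℝ (ι → ℝ)) :
    (𝓝 (0 : E)).HasBasis (fun p : Set ι × ℝ => p.1.Finite ∧ 0 < p.2)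
      fun p => {a : E | ∀ i ∈ p.1, |(a : ι → ℝ) i| < p.2} := by
  rw [nhds_subtype]
  exact (_root_.hasBasis_nhds_zero_pi ι).comap _

theorem Cp.isOpenMap_of_image_mem_nhds {X N : Type*} [TopologicalSpace X] [AddCommGroup N]
    [Module ℝ N] [TopologicalSpace N] [IsTopologicalAddGroup N] (T : Cp X →ₗ[ℝ] N)
    (hT : ∀ (F : Finset X) (ε : ℝ), 0 < ε → T '' {f | ∀ x ∈ F, |(f : X → ℝ) x| < ε} ∈ 𝓝 0) :
    IsOpenMap T := by
  refine IsTopologicalAddGroup.isOpenMap_iff_nhds_zero.2 (Filter.le_map_iff.2 fun s hs => ?_)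
  obtain ⟨⟨F, ε⟩, ⟨hF, hε⟩, hsub⟩ := (Submodule.hasBasis_nhds_zero_pi (Cp X)).mem_iff.1 hs
  refine Filter.mem_of_superset (hT hF.toFinset ε hε) (Set.image_mono fun f hf => hsub ?_)
  exact fun x hx => hf x (hF.mem_toFinset.2 hx)

section Extension

variable {X : Type*} [TopologicalSpace X] {D : Set X}

theorem CStarEmbedded.exists_extension_abs_le (hD : CStarEmbedded D) {d : D → ℝ}
    (hd : Continuous d) {C : ℝ} (hC : 0 ≤ C) (hdC : ∀ x, |d x| ≤ C) :
    ∃ g : X → ℝ, Continuous g ∧ (∀ x : D, g x = d x) ∧ ∀ y, |g y| ≤ C := by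
  obtain ⟨g, hg, hgd⟩ := hD d hd ⟨C, hdC⟩
  refine ⟨fun y => max (-C) (min (g y) C), by fun_prop, fun x => ?_, fun y => ?_⟩
  · obtain ⟨hlo, hhi⟩ := abs_le.1 (hdC x)
    simp only [hgd, min_eq_left hhi, max_eq_right hlo]
  · exact abs_le.2 ⟨le_max_left _ _, max_le (by linarith) (min_le_right _ _)⟩

theorem CStarEmbedded.exists_extension_of_injective [DiscreteTopology D]
    (hD : CStarEmbedded D) {ι : Type*} {p : ι → D} (hp : p.Injective) (b : ι → ℝ) {C : ℝ}
    (hC : 0 ≤ C) (hbC : ∀ i, |b i| ≤ C) :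
    ∃ g : X → ℝ, Continuous g ∧ (∀ i, g (p i) = b i) ∧ ∀ y, |g y| ≤ C := by
  classical
  obtain ⟨g, hg, hgd, hgC⟩ := hD.exists_extension_abs_le (d := Function.extend p b 0)
    continuous_of_discreteTopology hC fun x => by
      rw [Function.extend_def]
      split_ifs
      exacts [hbC _, by simpa using hC]
  exact ⟨g, hg, fun i => by rw [hgd, hp.extend_apply], hgC⟩

end Extension

def tent (c t : ℝ) : ℝ := max 0 (1 - 2 * |t - c|)

theorem continuous_tent (c : ℝ) : Continuous (tent c) := by
  unfold tent; fun_prop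

@[simp] theorem tent_self (c : ℝ) : tent c c = 1 := by simp [tent]

theorem tent_eq_zero {c t : ℝ} (h : 1 / 2 ≤ |t - c|) : tent c t = 0 :=
  max_eq_left (by linarith)

theorem monotone_sub_natCast_of_add_one_le {u : ℕ → ℝ} (hu : ∀ n, u n + 1 ≤ u (n + 1)) :
    Monotone fun n => u n - n :=
  monotone_nat_of_le_succ fun n => by push_cast; linarith [hu n]

theorem add_one_le_of_add_one_le_succ {u : ℕ → ℝ} (hu : ∀ n, u n + 1 ≤ u (n + 1)) {m n : ℕ}
    (hmn : m < n) : u m + 1 ≤ u n := by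
  have h := monotone_sub_natCast_of_add_one_le hu hmn.le
  have : (m : ℝ) + 1 ≤ n := by exact_mod_cast hmn
  simp only at h
  linarith

theorem exists_continuous_interpolation {u : ℕ → ℝ} (hu : ∀ n, u n + 1 ≤ u (n + 1))
    (b : ℕ → ℝ) :
    ∃ h : ℝ → ℝ, Continuous h ∧ (∀ n, h (u n) = b n) ∧ ∀ t ≤ u 0 - 1 / 2, h t = 0 := by
  have hsep : ∀ m n, m ≠ n → 1 / 2 ≤ |u n - u m| := by
    intro m n hmn
    rcases hmn.lt_or_gt with h | h
    · rw [abs_of_nonneg] <;> linarith [add_one_le_of_add_one_le_succ hu h]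
    · rw [abs_of_nonpos] <;> linarith [add_one_le_of_add_one_le_succ hu h]
  have hfin : ∀ c, {n | u n < c}.Finite := fun c =>
    (Set.finite_Iio ⌈c - u 0⌉₊).subset fun n (hn : u n < c) => by
      have := monotone_sub_natCast_of_add_one_le hu (Nat.zero_le n)
      simp only [CharP.cast_eq_zero, sub_zero] at this
      exact Nat.lt_ceil.2 (by linarith)
  refine ⟨fun t => ∑ᶠ n, b n * tent (u n) t, ?_, fun n => ?_, fun t ht => ?_⟩
  · refine continuous_finsum (fun n => continuous_const.mul (continuous_tent _)) fun t =>
      ⟨Set.Iio (t + 1), Iio_mem_nhds (by linarith), (hfin (t + 3 / 2)).subset ?_⟩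
    rintro n ⟨s, hs, hst : s < t + 1⟩
    by_contra hn
    replace hn : t + 3 / 2 ≤ u n := not_lt.1 hn
    refine hs (show b n * tent (u n) s = 0 from ?_)
    rw [tent_eq_zero (by rw [abs_sub_comm, abs_of_nonneg] <;> linarith), mul_zero]
  · show ∑ᶠ m, b m * tent (u m) (u n) = b n
    rw [finsum_eq_single _ n fun m hm => by rw [tent_eq_zero (hsep m n hm), mul_zero]]
    simp
  · refine finsum_eq_zero_of_forall_eq_zero fun n => ?_
    have := monotone_sub_natCast_of_add_one_le hu (Nat.zero_le n)
    have hn : (0 : ℝ) ≤ n := n.cast_nonneg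
    simp only [CharP.cast_eq_zero, sub_zero] at this
    rw [tent_eq_zero (by rw [abs_sub_comm, abs_of_nonneg] <;> linarith), mul_zero]

theorem exists_seq_add_one_le_of_forall_exists_lt {α : Type*} {v : α → ℝ}
    (h : ∀ C, ∃ x, C < v x) : ∃ y : ℕ → α, ∀ n, v (y n) + 1 ≤ v (y (n + 1)) := by
  choose next hnext using h
  exact ⟨fun n => Nat.rec (next 0) (fun _ x => next (v x + 1)) n, fun n => (hnext _).le⟩

section Unbounded

variable {X : Type*} [TopologicalSpace X] {D : Set X}

theorem Cp.exists_isOpenMap_pi_of_unbounded [DiscreteTopology D] (hD : CStarEmbedded D)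
    {f₀ : X → ℝ} (hf₀ : Continuous f₀) (hunb : ∀ C, ∃ x : D, C < |f₀ x|) :
    ∃ T : Cp X →ₗ[ℝ] (ℕ → ℝ), Continuous T ∧ IsOpenMap T := by
  obtain ⟨y, hy⟩ := exists_seq_add_one_le_of_forall_exists_lt hunb
  set u : ℕ → ℝ := fun n => |f₀ (y n)|
  have hy_inj : y.Injective := fun m n hmn => by
    by_contra hne
    rcases Ne.lt_or_gt hne with h | h <;>
    linarith [add_one_le_of_add_one_le_succ hy h, congrArg (fun x : D => |f₀ x|) hmn]
  let T : Cp X →ₗ[ℝ] (ℕ → ℝ) :=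
    (LinearMap.funLeft ℝ ℝ fun n => (y n : X)) ∘ₗ (Cp X).subtype
  refine ⟨T, continuous_pi fun n => (continuous_apply (y n : X)).comp continuous_subtype_val,
    Cp.isOpenMap_of_image_mem_nhds T fun F ε hε => ?_⟩
  obtain ⟨N, hN⟩ : ∃ N, ∑ x ∈ F, |f₀ x| + 1 / 2 ≤ u N := by
    obtain ⟨N, hN⟩ := exists_nat_gt (∑ x ∈ F, |f₀ x| + 1 / 2 - u 0)
    have := monotone_sub_natCast_of_add_one_le hy (Nat.zero_le N)
    simp only [CharP.cast_eq_zero, sub_zero] at this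
    exact ⟨N, by linarith⟩
  refine (hasBasis_nhds_zero_pi ℕ).mem_iff.2
    ⟨(Set.Iio N, ε / 2), ⟨Set.finite_Iio N, half_pos hε⟩, fun a ha => ?_⟩
  obtain ⟨g, hg, hgy, hgε⟩ := hD.exists_extension_of_injective hy_inj
    (fun n => if n < N then a n else 0) (half_pos hε).le fun n => by
      split_ifs with hn
      exacts [(ha n hn).le, by simpa using (half_pos hε).le]
  obtain ⟨h, hh, hhu, hh0⟩ := exists_continuous_interpolation (u := fun n => u (N + n))
    (fun n => hy (N + n)) fun n => a (N + n)
  refine ⟨⟨g + fun x => h |f₀ x|, hg.add (hh.comp hf₀.abs)⟩, fun x hx => ?_, funext fun n => ?_⟩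
  · have : |f₀ x| ≤ u N - 1 / 2 := by
      linarith [Finset.single_le_sum (fun x _ => abs_nonneg (f₀ x)) hx]
    show |g x + h (|f₀ x|)| < ε
    rw [hh0 _ this, add_zero]
    linarith [hgε x]
  · show g (y n) + h (u n) = a n
    rw [hgy]
    rcases lt_or_ge n N with hn | hn
    · have : u n ≤ u (N + 0) - 1 / 2 := by
        rw [add_zero]; linarith [add_one_le_of_add_one_le_succ hy hn]
      rw [if_pos hn, hh0 _ this, add_zero]
    · obtain ⟨k, rfl⟩ := Nat.exists_eq_add_of_le hn
      rw [if_neg (by omega), hhu, zero_add]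

end Unbounded

noncomputable def dyadicWeightedSum {X : Type*} (p : ℕ × ℕ → X) : (X → ℝ) →ₗ[ℝ] (ℕ → ℝ) where
  toFun f n := ∑ k ∈ Finset.range (n + 1), (1 / 2 : ℝ) ^ k * f (p (n, k))
  map_add' f g := by ext n; simp [mul_add, Finset.sum_add_distrib]
  map_smul' c f := by ext n; simp [Finset.mul_sum, mul_left_comm]

theorem dyadicWeightedSum_apply {X : Type*} (p : ℕ × ℕ → X) (f : X → ℝ) (n : ℕ) :
    dyadicWeightedSum p f n = ∑ k ∈ Finset.range (n + 1), (1 / 2 : ℝ) ^ k * f (p (n, k)) :=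
  rfl

theorem continuous_dyadicWeightedSum {X : Type*} (p : ℕ × ℕ → X) :
    Continuous (dyadicWeightedSum p) :=
  continuous_pi fun n => by simp only [dyadicWeightedSum_apply]; fun_prop

theorem dyadicWeightedSum_mem_ellInfty {X : Type*} {p : ℕ × ℕ → X} {f : X → ℝ} {C : ℝ}
    (hf : ∀ m, |f (p m)| ≤ C) : dyadicWeightedSum p f ∈ ellInfty := by
  have hC : 0 ≤ C := (abs_nonneg _).trans (hf 0)
  refine ⟨2 * C, fun n => ?_⟩
  calc |dyadicWeightedSum p f n|
      ≤ ∑ k ∈ Finset.range (n + 1), (1 / 2 : ℝ) ^ k * C := by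
        rw [dyadicWeightedSum_apply]
        refine (Finset.abs_sum_le_sum_abs _ _).trans (Finset.sum_le_sum fun k _ => ?_)
        rw [abs_mul, abs_of_pos (by positivity)]
        exact mul_le_mul_of_nonneg_left (hf _) (by positivity)
    _ ≤ 2 * C := by
        rw [← Finset.sum_mul]
        exact mul_le_mul_of_nonneg_right (sum_geometric_two_le _) hC

theorem exists_nat_le_card_forall_half_le_abs_sub (s : Finset ℝ) :
    ∃ γ : ℕ, γ ≤ s.card ∧ ∀ t ∈ s, 1 / 2 ≤ |t - γ| := by
  obtain ⟨γ, hγ, hγs⟩ : ∃ γ ∈ Finset.range (s.card + 1), (γ : ℤ) ∉ s.image round := by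
    by_contra! h
    have := Finset.card_le_card_of_injOn (fun n : ℕ => (n : ℤ)) h Nat.cast_injective.injOn
    rw [Finset.card_range] at this
    linarith [s.card_image_le (f := round)]
  refine ⟨γ, Nat.lt_succ_iff.1 (Finset.mem_range.1 hγ), fun t ht => ?_⟩
  by_contra! h
  refine hγs (Finset.mem_image.2 ⟨t, ht, ?_⟩)
  obtain ⟨h₁, h₂⟩ := abs_lt.1 h
  rw [round_eq, Int.floor_eq_iff]
  push_cast
  constructor <;> linarith

section Bounded

variable {X : Type*} [TopologicalSpace X] {D : Set X}

theorem CStarEmbedded.exists_dyadicWeightedSum_eq [DiscreteTopology D] (hD : CStarEmbedded D)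
    {p : ℕ × ℕ → D} (hp : p.Injective) {w : X → ℝ} (hw : Continuous w) {γ r : ℕ}
    (hγr : γ < r) (hwγ : ∀ n, w (p (n, γ)) = γ) {a : ℕ → ℝ} (ha : a ∈ ellInfty) {δ : ℝ}
    (hδ : 0 ≤ δ) (haδ : ∀ n < r, |a n| ≤ δ) :
    ∃ g : X → ℝ, Continuous g ∧ dyadicWeightedSum (fun m => (p m : X)) g = a ∧
      ∀ x, 1 / 2 ≤ |w x - γ| → |g x| ≤ δ := by
  -- `g₁` realises the coordinates `n < r` on the points `p (n, 0)`, `g₂` the others on the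
  -- points `p (n, γ)`, where `tent γ ∘ w` equals `1`.
  obtain ⟨A, hA⟩ := ha
  have hA0 : 0 ≤ A := (abs_nonneg _).trans (hA 0)
  obtain ⟨g₁, hg₁, hg₁p, hg₁δ⟩ := hD.exists_extension_of_injective hp
    (fun m => if m.1 < r ∧ m.2 = 0 then a m.1 else 0) hδ fun m => by
      split_ifs with hm
      exacts [haδ _ hm.1, by simpa using hδ]
  obtain ⟨g₂, hg₂, hg₂p, -⟩ := hD.exists_extension_of_injective hp
    (fun m => if r ≤ m.1 ∧ m.2 = γ then 2 ^ γ * a m.1 else 0) (C := 2 ^ γ * A)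
    (by positivity) fun m => by
      split_ifs
      · rw [abs_mul, abs_of_pos (by positivity)]
        exact mul_le_mul_of_nonneg_left (hA _) (by positivity)
      · simpa using by positivity
  refine ⟨g₁ + fun x => tent γ (w x) * g₂ x, hg₁.add ((continuous_tent _).comp hw |>.mul hg₂),
    funext fun n => ?_, fun x hx => ?_⟩
  · have hval : ∀ k, (g₁ + fun x => tent γ (w x) * g₂ x) (p (n, k)) =
        (if n < r ∧ k = 0 then a n else 0) + (if r ≤ n ∧ k = γ then 2 ^ γ * a n else 0) := by
      intro k
      simp only [Pi.add_apply, hg₁p, hg₂p]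
      congr 1
      split_ifs with h
      · rw [h.2, hwγ, tent_self, one_mul]
      · rw [mul_zero]
    simp only [dyadicWeightedSum_apply, hval, mul_add, Finset.sum_add_distrib]
    rcases lt_or_ge n r with hn | hn
    · simp [hn, not_le.2 hn]
    · simp [hn, not_lt.2 hn, show γ < n + 1 by omega, ← mul_assoc]
  · simp [tent_eq_zero hx, hg₁δ x]

theorem Cp.exists_isOpenMap_ellInfty_of_bounded [DiscreteTopology D] (hD : CStarEmbedded D)
    {p : ℕ × ℕ → D} (hp : p.Injective)
    (hbdd : ∀ f : X → ℝ, Continuous f → ∃ C, ∀ x : D, |f x| ≤ C) :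
    ∃ T : Cp X →ₗ[ℝ] ellInfty, Continuous T ∧ IsOpenMap T := by
  let S := dyadicWeightedSum fun m => (p m : X)
  let T : Cp X →ₗ[ℝ] ellInfty := (S ∘ₗ (Cp X).subtype).codRestrict ellInfty fun f =>
    dyadicWeightedSum_mem_ellInfty fun m => (hbdd f f.2).choose_spec (p m)
  have hS : Continuous fun f : Cp X => S f :=
    (continuous_dyadicWeightedSum _).comp continuous_subtype_val
  refine ⟨T, continuous_induced_rng.2 hS,
    Cp.isOpenMap_of_image_mem_nhds T fun F ε hε => ?_⟩
  set r := F.card + 1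
  obtain ⟨w, hw, hwp, -⟩ := hD.exists_extension_of_injective hp
    (fun m => ((min m.2 r : ℕ) : ℝ)) (Nat.cast_nonneg r) fun m => by
      rw [abs_of_nonneg (Nat.cast_nonneg _)]
      exact_mod_cast min_le_right _ _
  obtain ⟨γ, hγ, hγF⟩ := exists_nat_le_card_forall_half_le_abs_sub (F.image w)
  have hγr : γ < r := Nat.lt_succ_of_le (hγ.trans Finset.card_image_le)
  refine ellInfty.hasBasis_nhds_zero_pi.mem_iff.2
    ⟨(Set.Iio r, ε / 2), ⟨Set.finite_Iio r, half_pos hε⟩, fun a ha => ?_⟩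
  obtain ⟨g, hg, hga, hgε⟩ := hD.exists_dyadicWeightedSum_eq hp hw hγr
    (fun n => by rw [hwp, min_eq_left hγr.le]) a.2 (half_pos hε).le fun n hn => (ha n hn).le
  exact ⟨⟨g, hg⟩, fun x hx => (hgε x (hγF _ (Finset.mem_image_of_mem w hx))).trans_lt
    (half_lt_self hε), Subtype.ext hga⟩

end Bounded

theorem not_finiteDimensional_ellInfty : ¬FiniteDimensional ℝ ellInfty := fun _ =>
  Module.Finite.not_linearIndependent_of_infinite
    (fun n : ℕ => (⟨Pi.single n 1, 1, fun m => by
      rw [Pi.single_apply]; split_ifs <;> simp⟩ : ellInfty))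
    (.of_comp ellInfty.subtype (Pi.linearIndependent_single_one ℕ ℝ))

theorem not_finiteDimensional_pi_nat : ¬FiniteDimensional ℝ (ℕ → ℝ) := fun _ =>
  not_finiteDimensional_ellInfty inferInstance

theorem cp_quotient_pi_or_ellInfty_of_discrete_cstar_embedded_general
    (X : Type*) [TopologicalSpace X]
    (D : Set X) (hDinf : D.Infinite) [DiscreteTopology D] (hD : CStarEmbedded D) :
    ∃ Z : Submodule ℝ (Cp X),
      (Nonempty ((Cp X ⧸ Z) ≃L[ℝ] (ℕ → ℝ)) ∨ Nonempty ((Cp X ⧸ Z) ≃L[ℝ] ellInfty)) ∧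
      TopologicalSpace.MetrizableSpace (Cp X ⧸ Z) ∧
      ¬ FiniteDimensional ℝ (Cp X ⧸ Z) := by
  by_cases hbdd : ∀ f : X → ℝ, Continuous f → ∃ C, ∀ x : D, |f x| ≤ C
  · have := hDinf.to_subtype
    obtain ⟨T, hTc, hTo⟩ := Cp.exists_isOpenMap_ellInfty_of_bounded hD
      ((Infinite.natEmbedding D).injective.comp Nat.pairEquiv.injective) hbdd
    obtain ⟨e⟩ := T.nonempty_quotKer_equiv_of_isOpenMap hTc hTo
    exact ⟨_, Or.inr ⟨e⟩,
      (Topology.IsEmbedding.subtypeVal.comp e.toHomeomorph.isEmbedding).metrizableSpace,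
      fun _ => not_finiteDimensional_ellInfty (Module.Finite.equiv e.toLinearEquiv)⟩
  · push Not at hbdd
    obtain ⟨f₀, hf₀, hunb⟩ := hbdd
    obtain ⟨T, hTc, hTo⟩ := Cp.exists_isOpenMap_pi_of_unbounded hD hf₀ hunb
    obtain ⟨e⟩ := T.nonempty_quotKer_equiv_of_isOpenMap hTc hTo
    exact ⟨_, Or.inl ⟨e⟩, e.toHomeomorph.isEmbedding.metrizableSpace,
      fun _ => not_finiteDimensional_pi_nat (Module.Finite.equiv e.toLinearEquiv)⟩

/-- If a Tychonoff space `X` contains an infinite, discrete, `C*`-embedded subspace,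
then `C_p(X)` has a quotient (by a linear subspace) linearly homeomorphic to `ℝ^ℕ` or
to the subspace `ℓ∞` of `ℝ^ℕ`; in particular `C_p(X)` has an infinite-dimensional
metrizable quotient. -/
theorem cp_quotient_pi_or_ellInfty_of_discrete_cstar_embedded
    (X : Type*) [TopologicalSpace X] [T2Space X] [CompletelyRegularSpace X]
    (D : Set X) (hDinf : D.Infinite) [DiscreteTopology D] (hD : CStarEmbedded D) :
    ∃ Z : Submodule ℝ (Cp X),
      (Nonempty ((Cp X ⧸ Z) ≃L[ℝ] (ℕ → ℝ)) ∨ Nonempty ((Cp X ⧸ Z) ≃L[ℝ] ellInfty)) ∧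
      TopologicalSpace.MetrizableSpace (Cp X ⧸ Z) ∧
      ¬ FiniteDimensional ℝ (Cp X ⧸ Z) :=
  cp_quotient_pi_or_ellInfty_of_discrete_cstar_embedded_general X D hDinf hD
end
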